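/- arXiv:1604.05424 — 2 statements merged into one kernel-verified Lean document; each statement's English description precedes it below -/
import Mathlib

section
/- Let a torsion-free affine connection on an open set U ⊆ ℝ² be given by smooth Christoffel symbols and let p ∈ U. Then the characteristic polynomial of the affine Szabó operator S(X) equals λ² for every X ∈ ℝ² (i.e. the connection is affine Szabó at p) if and only if the Ricci tensor is cyclic parallel at p, i.e. (∇ᵢRic)ⱼₖ + (∇ⱼRic)ₖᵢ + (∇ₖRic)ᵢⱼ = 0 at p for all indices i, j, k (i.e. (U,∇) is an L₃-space at p). -/
open scoped BigOperators

noncomputable section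

variable {ι : Type} [Fintype ι] [DecidableEq ι]

/-- Partial derivative in the `i`-th coordinate direction. -/
def pd (i : ι) (f : (ι → ℝ) → ℝ) : (ι → ℝ) → ℝ :=
  fun p => fderiv ℝ f p (Pi.single i 1)

/-- Curvature components `R^l_{ijk}` of the torsion-free connection with Christoffel
symbols `Γ k i j = Γᵏᵢⱼ`:
`Rˡᵢⱼₖ = ∂ᵢΓˡⱼₖ − ∂ⱼΓˡᵢₖ + Σₘ (Γˡᵢₘ Γᵐⱼₖ − Γˡⱼₘ Γᵐᵢₖ)`. -/
def curv (Γ : ι → ι → ι → (ι → ℝ) → ℝ) (l i j k : ι) : (ι → ℝ) → ℝ :=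
  fun p => pd i (Γ l j k) p - pd j (Γ l i k) p +
    ∑ m, (Γ l i m p * Γ m j k p - Γ l j m p * Γ m i k p)

/-- Components `(∇ₕR)ˡᵢⱼₖ` of the covariant derivative of the curvature. -/
def covR (Γ : ι → ι → ι → (ι → ℝ) → ℝ) (h l i j k : ι) : (ι → ℝ) → ℝ :=
  fun p => pd h (curv Γ l i j k) p +
    ∑ m, (Γ l h m p * curv Γ m i j k p - Γ m h i p * curv Γ l m j k p
      - Γ m h j p * curv Γ l i m k p - Γ m h k p * curv Γ l i j m p)

/-- The Szabó operator `S(X) : Y ↦ (∇_X R)(Y,X)X` at the point `p`, as a matrix: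
`(S(X)Y)ˡ = Σ_{h,i,j,k} Xʰ Yⁱ Xʲ Xᵏ (∇ₕR)ˡᵢⱼₖ`. -/
def szabo (Γ : ι → ι → ι → (ι → ℝ) → ℝ) (p X : ι → ℝ) : Matrix ι ι ℝ :=
  Matrix.of fun l i => ∑ h, ∑ j, ∑ k, X h * X j * X k * covR Γ h l i j k p

/-- Ricci tensor `Ricⱼₖ = Σᵢ Rⁱᵢⱼₖ`. -/
def ricci (Γ : ι → ι → ι → (ι → ℝ) → ℝ) (j k : ι) : (ι → ℝ) → ℝ :=
  fun p => ∑ i, curv Γ i i j k p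

/-- Covariant derivative of the Ricci tensor,
`(∇ᵢRic)ⱼₖ = ∂ᵢRicⱼₖ − Σₘ (Γᵐᵢⱼ Ricₘₖ + Γᵐᵢₖ Ricⱼₘ)`. -/
def covRic (Γ : ι → ι → ι → (ι → ℝ) → ℝ) (i j k : ι) : (ι → ℝ) → ℝ :=
  fun p => pd i (ricci Γ j k) p -
    ∑ m, (Γ m i j p * ricci Γ m k p + Γ m i k p * ricci Γ j m p)

/-- The Ricci tensor is cyclic parallel at `p`. -/
def CyclicParallelAt (Γ : ι → ι → ι → (ι → ℝ) → ℝ) (p : ι → ℝ) : Prop :=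
  ∀ i j k, covRic Γ i j k p + covRic Γ j k i p + covRic Γ k i j p = 0

/-- Christoffel symbols `Γ̃ᶜₐᵦ = ½ Σ_d g̃ᶜᵈ (∂ₐ g̃ᵦ_d + ∂ᵦ g̃ₐ_d − ∂_d g̃ₐᵦ)` of the
Levi-Civita connection of a pseudo-Riemannian metric `g`. -/
def christoffel (g : (ι → ℝ) → Matrix ι ι ℝ) (c a b : ι) : (ι → ℝ) → ℝ :=
  fun p => (1 / 2) * ∑ d, (g p)⁻¹ c d *
    (pd a (fun q => g q b d) p + pd b (fun q => g q a d) p - pd d (fun q => g q a b) p)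

end

/-!
Since `R(Y, X)` is skew in `Y, X`, so is `(∇_X R)(Y, X)`; hence `S(X) X = 0` and `det S(X) = 0`,
so on `ℝ²` the characteristic polynomial of `S(X)` is `λ² - tr S(X) λ`. Contracting the
curvature gives `tr S(X) = (∇_X Ric)(X, X)`, a cubic form in `X`. On `ℝ²` every index triple has
a repeated entry, so the cyclic sum of a 3-tensor is half its full symmetrization, and the cubic
form vanishes identically iff all cyclic sums of `∇Ric` vanish.
-/

open Matrix Finset

lemma sum_sum_mul_mul_eq_zero_of_antisymm {ι : Type*} [Fintype ι] (x : ι → ℝ) (f : ι → ι → ℝ)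
    (hf : ∀ i j, f j i = -f i j) : ∑ i, ∑ j, x i * x j * f i j = 0 := by
  have hswap : ∑ i, ∑ j, x i * x j * f i j = -∑ i, ∑ j, x i * x j * f i j := by
    conv_lhs => rw [sum_comm]
    simp only [← sum_neg_distrib]
    exact sum_congr rfl fun i _ => sum_congr rfl fun j _ => by
      linear_combination (x i * x j) * hf i j
  linarith

section Curvature

variable {ι : Type} [Fintype ι] [DecidableEq ι] (Γ : ι → ι → ι → (ι → ℝ) → ℝ)

lemma pd_neg (i : ι) (f : (ι → ℝ) → ℝ) : pd i (-f) = -pd i f := by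
  funext p
  simp [pd, fderiv_neg]

lemma differentiableAt_pd {f : (ι → ℝ) → ℝ} {p : ι → ℝ} (hf : ContDiffAt ℝ 2 f p) (i : ι) :
    DifferentiableAt ℝ (pd i f) p :=
  ((hf.fderiv_right (m := 1) (by norm_num)).clm_apply contDiffAt_const).differentiableAt
    (by norm_num)

lemma curv_swap (l i j k : ι) : curv Γ l j i k = -curv Γ l i j k := by
  funext q
  simp only [curv, Pi.neg_apply, sum_sub_distrib]
  ring

lemma differentiableAt_curv {p : ι → ℝ} (hΓ : ∀ k i j, ContDiffAt ℝ 2 (Γ k i j) p)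
    (l i j k : ι) : DifferentiableAt ℝ (curv Γ l i j k) p := by
  have hΓ' : ∀ k i j, DifferentiableAt ℝ (Γ k i j) p := fun k i j =>
    (hΓ k i j).differentiableAt (by norm_num)
  exact ((differentiableAt_pd (hΓ l j k) i).sub (differentiableAt_pd (hΓ l i k) j)).add
    (DifferentiableAt.fun_sum fun m _ =>
      ((hΓ' l i m).mul (hΓ' m j k)).sub ((hΓ' l j m).mul (hΓ' m i k)))

lemma covR_swap (h l i j k : ι) (p : ι → ℝ) : covR Γ h l j i k p = -covR Γ h l i j k p := by
  have h₁ : ∀ m, curv Γ m j i k = -curv Γ m i j k := fun m => curv_swap Γ m i j k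
  have h₂ : ∀ m, curv Γ l m i k = -curv Γ l i m k := fun m => curv_swap Γ l i m k
  have h₃ : ∀ m, curv Γ l j m k = -curv Γ l m j k := fun m => curv_swap Γ l m j k
  have h₄ : ∀ m, curv Γ l j i m = -curv Γ l i j m := fun m => curv_swap Γ l i j m
  simp only [covR, h₁, h₂, h₃, h₄, pd_neg, Pi.neg_apply, neg_add, ← sum_neg_distrib]
  congr 1
  exact sum_congr rfl fun m _ => by ring

lemma pd_ricci {p : ι → ℝ} (hR : ∀ l i j k, DifferentiableAt ℝ (curv Γ l i j k) p) (h j k : ι) :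
    pd h (ricci Γ j k) p = ∑ l, pd h (curv Γ l l j k) p := by
  change fderiv ℝ (fun q => ∑ l, curv Γ l l j k q) p _ = _
  rw [fderiv_fun_sum fun l _ => hR l l j k, _root_.sum_apply]
  rfl

lemma sum_covR_self {p : ι → ℝ} (hR : ∀ l i j k, DifferentiableAt ℝ (curv Γ l i j k) p)
    (h j k : ι) : ∑ l, covR Γ h l l j k p = covRic Γ h j k p := by
  have hcancel : ∑ l, ∑ m, Γ l h m p * curv Γ m l j k p
      = ∑ l, ∑ m, Γ m h l p * curv Γ l m j k p := sum_comm
  have hj : ∑ l, ∑ m, Γ m h j p * curv Γ l l m k p = ∑ m, Γ m h j p * ricci Γ m k p := by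
    rw [sum_comm]; simp only [ricci, mul_sum]
  have hk : ∑ l, ∑ m, Γ m h k p * curv Γ l l j m p = ∑ m, Γ m h k p * ricci Γ j m p := by
    rw [sum_comm]; simp only [ricci, mul_sum]
  simp only [covR, covRic, sum_add_distrib, sum_sub_distrib, pd_ricci Γ hR]
  rw [hcancel, hj, hk]
  ring

lemma szabo_mulVec_self (p X : ι → ℝ) : szabo Γ p X *ᵥ X = 0 := by
  funext l
  have hrearrange : (szabo Γ p X *ᵥ X) l
      = ∑ i, ∑ j, X i * X j * ∑ h, ∑ k, X h * X k * covR Γ h l i j k p := by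
    simp only [mulVec, dotProduct, szabo, of_apply, sum_mul, mul_sum]
    refine sum_congr rfl fun i _ => ?_
    rw [sum_comm]
    exact sum_congr rfl fun j _ => sum_congr rfl fun h _ => sum_congr rfl fun k _ => by ring
  rw [hrearrange, Pi.zero_apply]
  refine sum_sum_mul_mul_eq_zero_of_antisymm X _ fun i j => ?_
  simp only [covR_swap Γ _ l i j, mul_neg, sum_neg_distrib]

lemma szabo_zero (p : ι → ℝ) : szabo Γ p 0 = 0 := by
  ext l i
  simp [szabo]

lemma det_szabo [Nonempty ι] (p X : ι → ℝ) : (szabo Γ p X).det = 0 := by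
  rcases eq_or_ne X 0 with rfl | hX
  · rw [szabo_zero, det_zero]
  · exact exists_mulVec_eq_zero_iff.mp ⟨X, hX, szabo_mulVec_self Γ p X⟩

lemma trace_szabo {p : ι → ℝ} (hR : ∀ l i j k, DifferentiableAt ℝ (curv Γ l i j k) p)
    (X : ι → ℝ) :
    (szabo Γ p X).trace = ∑ h, ∑ j, ∑ k, X h * X j * X k * covRic Γ h j k p := by
  simp only [Matrix.trace, Matrix.diag, szabo, of_apply, ← sum_covR_self Γ hR, mul_sum]
  conv_lhs => rw [sum_comm]
  refine sum_congr rfl fun h _ => ?_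
  conv_lhs => rw [sum_comm]
  exact sum_congr rfl fun j _ => sum_comm

end Curvature

open Polynomial in
lemma Matrix.charpoly_eq_X_sq_iff_trace_eq_zero {R : Type*} [CommRing R] [IsDomain R]
    {M : Matrix (Fin 2) (Fin 2) R} (hM : M.det = 0) : M.charpoly = X ^ 2 ↔ M.trace = 0 := by
  rw [charpoly_fin_two, hM]
  simp [X_ne_zero]

lemma cubic_form_eq_zero_iff_cyclic_sum_eq_zero (T : Fin 2 → Fin 2 → Fin 2 → ℝ) :
    (∀ X : Fin 2 → ℝ, ∑ h, ∑ j, ∑ k, X h * X j * X k * T h j k = 0) ↔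
      ∀ i j k, T i j k + T j k i + T k i j = 0 := by
  simp only [Fin.sum_univ_two]
  constructor
  · intro hT i j k
    have e₁ := hT ![1, 0]
    have e₂ := hT ![0, 1]
    have e₃ := hT ![1, 1]
    have e₄ := hT ![1, -1]
    simp only [cons_val_zero, cons_val_one, cons_val_fin_one, mul_one, one_mul, mul_zero,
      zero_mul, add_zero, zero_add, mul_neg, neg_mul, neg_neg] at e₁ e₂ e₃ e₄
    revert i j k
    simp only [Fin.forall_fin_two]
    and_intros <;> linarith
  · intro hT X
    linear_combination (X 0 ^ 3 / 3) * hT 0 0 0 + (X 0 ^ 2 * X 1) * hT 0 0 1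
      + (X 0 * X 1 ^ 2) * hT 0 1 1 + (X 1 ^ 3 / 3) * hT 1 1 1

theorem stmt_2_general (U : Set (Fin 2 → ℝ)) (hU : IsOpen U)
    (Γ : Fin 2 → Fin 2 → Fin 2 → (Fin 2 → ℝ) → ℝ)
    (hsmooth : ∀ k i j, ContDiffOn ℝ (⊤ : ℕ∞) (Γ k i j) U)
    (p : Fin 2 → ℝ) (hp : p ∈ U) :
    (∀ X : Fin 2 → ℝ, (szabo Γ p X).charpoly = Polynomial.X ^ 2) ↔
      CyclicParallelAt Γ p := by
  have hΓ : ∀ k i j, ContDiffAt ℝ 2 (Γ k i j) p := fun k i j =>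
    ((hsmooth k i j).contDiffAt (hU.mem_nhds hp)).of_le (WithTop.coe_le_coe.mpr le_top)
  simp_rw [charpoly_eq_X_sq_iff_trace_eq_zero (det_szabo Γ p _),
    trace_szabo Γ (differentiableAt_curv Γ hΓ)]
  exact cubic_form_eq_zero_iff_cyclic_sum_eq_zero _

/-- a torsion-free affine connection on an open set `U ⊆ ℝ²` with smooth
Christoffel symbols is affine Szabó at `p ∈ U` (the characteristic polynomial of the affine
Szabó operator `S(X)` is `λ²` for every `X`) if and only if its Ricci tensor is cyclic
parallel at `p` (i.e. `(U,∇)` is an `L₃`-space at `p`). -/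
theorem stmt_2 (U : Set (Fin 2 → ℝ)) (hU : IsOpen U)
    (Γ : Fin 2 → Fin 2 → Fin 2 → (Fin 2 → ℝ) → ℝ)
    (hsmooth : ∀ k i j, ContDiffOn ℝ (⊤ : ℕ∞) (Γ k i j) U)
    (hsym : ∀ k i j, Γ k i j = Γ k j i)
    (p : Fin 2 → ℝ) (hp : p ∈ U) :
    (∀ X : Fin 2 → ℝ, (szabo Γ p X).charpoly = Polynomial.X ^ 2) ↔
      CyclicParallelAt Γ p :=
  stmt_2_general U hU Γ hsmooth p hp
end

section
/- Let ∇ be the torsion-free affine connection on ℝ³ whose only nonzero Christoffel symbols are Γ²₁₁ = u₁u₃, Γ²₃₃ = u₁ + u₃ (and Γ²₂₂ = 0). Then ∇ is affine Szabó: at every point p ∈ ℝ³ the characteristic polynomial of the affine Szabó operator S(X) equals λ³ for every X ∈ ℝ³. -/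
open scoped BigOperators

/-- The torsion-free connection on `ℝ³` whose only nonzero Christoffel symbols are
`Γ²₁₁ = u₁u₃` and `Γ²₃₃ = u₁ + u₃`. -/
def gammaEx : Fin 3 → Fin 3 → Fin 3 → (Fin 3 → ℝ) → ℝ :=
  fun k i j =>
    if k = 1 ∧ i = 0 ∧ j = 0 then (fun u => u 0 * u 2)
    else if k = 1 ∧ i = 2 ∧ j = 2 then (fun u => u 0 + u 2)
    else 0

/-!
The connection is a special case of a simple class: its Christoffel symbols take values in the
line spanned by `∂₂` (index `1 : Fin 3`), the field `∂₂` is parallel, and nothing depends on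
`u₂`. For such a connection the quadratic terms of the curvature and of its covariant derivative
vanish; both are supported in the upper index `2` and vanish when the first lower index of the
curvature is `2`. Hence every Szabó operator has a single nonzero row, with zero diagonal entry,
so it squares to zero and its characteristic polynomial is `λ³`.
-/

theorem Matrix.mul_self_eq_zero_of_single_row {n R : Type*} [Fintype n] [CommRing R]
    {M : Matrix n n R} {a : n} (hM : ∀ l i, l ≠ a ∨ i = a → M l i = 0) : M * M = 0 := by
  ext l i
  rw [Matrix.mul_apply, Matrix.zero_apply]
  refine Finset.sum_eq_zero fun m _ => ?_
  by_cases hl : l = a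
  · by_cases hm : m = a
    · rw [hM l m (Or.inr hm), zero_mul]
    · rw [hM m i (Or.inl hm), mul_zero]
  · rw [hM l m (Or.inl hl), zero_mul]

theorem Matrix.charpoly_eq_X_pow_of_mul_self_eq_zero {n R : Type*} [Fintype n] [DecidableEq n]
    [CommRing R] [IsDomain R] {M : Matrix n n R} (hM : M * M = 0) :
    M.charpoly = Polynomial.X ^ Fintype.card n :=
  sub_eq_zero.mp (isNilpotent_charpoly_sub_pow_of_isNilpotent ⟨2, by rw [sq, hM]⟩).eq_zero

section

variable {ι : Type} [DecidableEq ι]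

theorem pd_zero (i : ι) (p : ι → ℝ) : pd i (0 : (ι → ℝ) → ℝ) p = 0 := by
  rw [pd, fderiv_zero]
  rfl

variable [Fintype ι]

theorem pd_eq_zero_of_add_smul_single {f : (ι → ℝ) → ℝ} {a : ι}
    (hf : ∀ u (t : ℝ), f (u + t • Pi.single a 1) = f u) (p : ι → ℝ) : pd a f p = 0 := by
  by_cases hdiff : DifferentiableAt ℝ f p
  · rw [pd, ← hdiff.lineDeriv_eq_fderiv, lineDeriv]
    simp only [hf, deriv_const]
  · rw [pd, fderiv_zero_of_not_differentiableAt hdiff]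
    rfl

structure IsParallelDirection (Γ : ι → ι → ι → (ι → ℝ) → ℝ) (a : ι) : Prop where
  eq_zero_of_ne : ∀ k i j, k ≠ a → Γ k i j = 0
  left_eq_zero : ∀ k j, Γ k a j = 0
  right_eq_zero : ∀ k i, Γ k i a = 0
  add_smul_single : ∀ k i j u (t : ℝ), Γ k i j (u + t • Pi.single a 1) = Γ k i j u

namespace IsParallelDirection

variable {Γ : ι → ι → ι → (ι → ℝ) → ℝ} {a : ι}

theorem curv_eq_zero_of_ne (hΓ : IsParallelDirection Γ a) {l : ι} (hl : l ≠ a) (i j k : ι) :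
    curv Γ l i j k = 0 := by
  funext p
  simp [curv, hΓ.eq_zero_of_ne l _ _ hl, pd_zero]

theorem curv_left_eq_zero (hΓ : IsParallelDirection Γ a) (l j k : ι) : curv Γ l a j k = 0 := by
  funext p
  simp [curv, hΓ.left_eq_zero, pd_zero, pd_eq_zero_of_add_smul_single (hΓ.add_smul_single l j k)]

theorem covR_eq_zero_of_ne (hΓ : IsParallelDirection Γ a) (h : ι) {l : ι} (hl : l ≠ a)
    (i j k : ι) : covR Γ h l i j k = 0 := by
  funext p
  simp [covR, hΓ.curv_eq_zero_of_ne hl, hΓ.eq_zero_of_ne l _ _ hl, pd_zero]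

theorem covR_left_eq_zero (hΓ : IsParallelDirection Γ a) (h l j k : ι) :
    covR Γ h l a j k = 0 := by
  funext p
  simp [covR, hΓ.curv_left_eq_zero, hΓ.right_eq_zero, pd_zero]

theorem szabo_apply_eq_zero (hΓ : IsParallelDirection Γ a) (p X : ι → ℝ) {l i : ι}
    (hli : l ≠ a ∨ i = a) : szabo Γ p X l i = 0 := by
  rcases hli with hl | rfl
  · simp [szabo, hΓ.covR_eq_zero_of_ne _ hl]
  · simp [szabo, hΓ.covR_left_eq_zero]

theorem charpoly_szabo (hΓ : IsParallelDirection Γ a) (p X : ι → ℝ) :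
    (szabo Γ p X).charpoly = Polynomial.X ^ Fintype.card ι :=
  Matrix.charpoly_eq_X_pow_of_mul_self_eq_zero <|
    Matrix.mul_self_eq_zero_of_single_row fun _ _ => hΓ.szabo_apply_eq_zero p X

end IsParallelDirection

end

theorem isParallelDirection_gammaEx : IsParallelDirection gammaEx 1 where
  eq_zero_of_ne k i j hk := by simp [gammaEx, hk]
  left_eq_zero k j := by simp [gammaEx]
  right_eq_zero k i := by simp [gammaEx]
  add_smul_single k i j u t := by
    unfold gammaEx
    split_ifs <;> simp

/-- the connection with `Γ²₁₁ = u₁u₃`, `Γ²₃₃ = u₁ + u₃` is affine Szabó: at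
every point the characteristic polynomial of the affine Szabó operator `S(X)` is `λ³` for
every `X ∈ ℝ³`. -/
theorem stmt_6 :
    ∀ (p : Fin 3 → ℝ) (X : Fin 3 → ℝ),
      (szabo gammaEx p X).charpoly = Polynomial.X ^ 3 := by
  intro p X
  simpa using isParallelDirection_gammaEx.charpoly_szabo p X
end
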